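/- arXiv:2207.09190 — 8 statements merged into one kernel-verified Lean document; each statement's English description precedes it below -/
import Mathlib

section
/- Let T be a strong monad on a symmetric monoidal category C. A morphism f : X → TY in C is a central cone of T at Y (i.e., for all objects Y', μ ∘ T(τ') ∘ τ ∘ (f ⊗ id_{TY'}) = μ ∘ T(τ) ∘ τ' ∘ (f ⊗ id_{TY'})) if and only if f is central in the Kleisli category C_T in the premonoidal sense (i.e., for every Kleisli morphism f' : X' → TY', the two evident composites (f ⊗_l X') then (Y ⊗_r f') and (X ⊗_r f') then (f ⊗_l Y') agree in C_T). -/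
open CategoryTheory MonoidalCategory

universe v u

/-- A strong monad on a monoidal category: a monad `T` equipped with a (left)
strength `str X Y : X ⊗ T Y ⟶ T (X ⊗ Y)` satisfying the usual coherence axioms. -/
structure StrongMonad (C : Type u) [Category.{v} C] [MonoidalCategory C] where
  T : Monad C
  str : ∀ (X Y : C), X ⊗ T.obj Y ⟶ T.obj (X ⊗ Y)
  str_natural_left : ∀ {X X' : C} (f : X ⟶ X') (Y : C),
    (f ▷ T.obj Y) ≫ str X' Y = str X Y ≫ T.map (f ▷ Y)
  str_natural_right : ∀ (X : C) {Y Y' : C} (g : Y ⟶ Y'),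
    (X ◁ T.map g) ≫ str X Y' = str X Y ≫ T.map (X ◁ g)
  str_unitor : ∀ (Y : C), str (𝟙_ C) Y ≫ T.map (λ_ Y).hom = (λ_ (T.obj Y)).hom
  str_assoc : ∀ (X Y Z : C),
    str (X ⊗ Y) Z ≫ T.map (α_ X Y Z).hom =
      (α_ X Y (T.obj Z)).hom ≫ (X ◁ str Y Z) ≫ str X (Y ⊗ Z)
  str_eta : ∀ (X Y : C), (X ◁ T.η.app Y) ≫ str X Y = T.η.app (X ⊗ Y)
  str_mu : ∀ (X Y : C),
    (X ◁ T.μ.app Y) ≫ str X Y = str X (T.obj Y) ≫ T.map (str X Y) ≫ T.μ.app (X ⊗ Y)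

namespace StrongMonad

variable {C : Type u} [Category.{v} C] [MonoidalCategory C] [SymmetricCategory C]
  (S : StrongMonad C)

/-- The right strength `τ' := T γ ∘ τ ∘ γ` obtained from the symmetry. -/
def rstr (X Y : C) : S.T.obj X ⊗ Y ⟶ S.T.obj (X ⊗ Y) :=
  (β_ (S.T.obj X) Y).hom ≫ S.str Y X ≫ S.T.map (β_ Y X).hom

/-- `(X, f)` is a central cone of `S` at `Y`:
`μ ∘ T τ' ∘ τ ∘ (f ⊗ id) = μ ∘ T τ ∘ τ' ∘ (f ⊗ id)` for every object `Y'`. -/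
def IsCentralCone {X Y : C} (f : X ⟶ S.T.obj Y) : Prop :=
  ∀ Y' : C,
    (f ▷ S.T.obj Y') ≫ S.str (S.T.obj Y) Y' ≫ S.T.map (S.rstr Y Y') ≫ S.T.μ.app (Y ⊗ Y') =
    (f ▷ S.T.obj Y') ≫ S.rstr Y (S.T.obj Y') ≫ S.T.map (S.str Y Y') ≫ S.T.μ.app (Y ⊗ Y')

/-- `f : X ⟶ T Y` is central in the Kleisli category in the premonoidal sense:
for every Kleisli morphism `f' : X' ⟶ T Y'`, the two composites
`(f ⊗ₗ X') ; (Y ⊗ᵣ f')` and `(X ⊗ᵣ f') ; (f ⊗ₗ Y')` agree in the Kleisli category. -/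
def IsCentralMorphism {X Y : C} (f : X ⟶ S.T.obj Y) : Prop :=
  ∀ {X' Y' : C} (f' : X' ⟶ S.T.obj Y'),
    (f ▷ X') ≫ S.rstr Y X' ≫ S.T.map ((Y ◁ f') ≫ S.str Y Y') ≫ S.T.μ.app (Y ⊗ Y') =
    (X ◁ f') ≫ S.str X Y' ≫ S.T.map ((f ▷ Y') ≫ S.rstr Y Y') ≫ S.T.μ.app (Y ⊗ Y')

/-- A terminal central cone at `X`: a central cone through which every central
cone at `X` factors uniquely. -/
def IsTerminalCentralCone {X Z : C} (ι : Z ⟶ S.T.obj X) : Prop :=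
  S.IsCentralCone ι ∧
    ∀ {Z' : C} (ι' : Z' ⟶ S.T.obj X), S.IsCentralCone ι' → ∃! φ : Z' ⟶ Z, φ ≫ ι = ι'

/-- A strong monad is commutative when the two double-strength maps agree. -/
def Commutative : Prop :=
  ∀ X Y : C,
    S.str (S.T.obj X) Y ≫ S.T.map (S.rstr X Y) ≫ S.T.μ.app (X ⊗ Y) =
    S.rstr X (S.T.obj Y) ≫ S.T.map (S.str X Y) ≫ S.T.μ.app (X ⊗ Y)

/-- A morphism of strong monads: a natural transformation commuting with the
units, multiplications and strengths. -/
structure Hom (S₁ S₂ : StrongMonad C) where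
  app : ∀ X : C, S₁.T.obj X ⟶ S₂.T.obj X
  naturality : ∀ {X Y : C} (f : X ⟶ Y), S₁.T.map f ≫ app Y = app X ≫ S₂.T.map f
  unit : ∀ X : C, S₁.T.η.app X ≫ app X = S₂.T.η.app X
  mult : ∀ X : C,
    S₁.T.μ.app X ≫ app X = app (S₁.T.obj X) ≫ S₂.T.map (app X) ≫ S₂.T.μ.app X
  strength : ∀ X Y : C, S₁.str X Y ≫ app (X ⊗ Y) = (X ◁ app Y) ≫ S₂.str X Y

end StrongMonad

/-- Naturality of the right strength in its second argument. -/
theorem StrongMonad.rstr_natural_right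
    {C : Type u} [Category.{v} C] [MonoidalCategory C] [SymmetricCategory C]
    (S : StrongMonad C) (X : C) {Y Y' : C} (g : Y ⟶ Y') :
    (S.T.obj X ◁ g) ≫ S.rstr X Y' = S.rstr X Y ≫ S.T.map (X ◁ g) := by
  simp only [rstr]
  rw [BraidedCategory.braiding_naturality_right_assoc]
  slice_lhs 2 3 => rw [S.str_natural_left g X]
  simp only [Category.assoc, ← S.T.map_comp,
    BraidedCategory.braiding_naturality_left]

/-- A morphism `f : X ⟶ T Y` is a central cone of `T` at `Y`
iff `f` is central in the Kleisli category in the premonoidal sense. -/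
theorem centralCone_iff_centralMorphism
    {C : Type u} [Category.{v} C] [MonoidalCategory C] [SymmetricCategory C]
    (T : StrongMonad C) {X Y : C} (f : X ⟶ T.T.obj Y) :
    T.IsCentralCone f ↔ T.IsCentralMorphism f := by
  constructor
  · intro hc X' Y' f'
    rw [T.T.map_comp, T.T.map_comp]
    slice_lhs 2 3 => rw [← T.rstr_natural_right Y f']
    slice_lhs 1 2 => rw [← whisker_exchange]
    slice_lhs 2 5 => rw [← hc Y']
    slice_lhs 2 3 => rw [T.str_natural_left f Y']
    simp [Category.assoc]
  · intro hm Y'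
    have h := hm (𝟙 (T.T.obj Y'))
    simp only [MonoidalCategory.whiskerLeft_id, Category.id_comp] at h
    rw [h, T.T.map_comp]
    slice_rhs 1 2 => rw [← T.str_natural_left f Y']
    simp [Category.assoc]
end

section
/- For any monad T on Set (with canonical strength), the assignment Z X := { t ∈ TX | ∀ Y, ∀ s ∈ TY, μ(T τ'(τ(t,s))) = μ(T τ(τ'(t,s))) } extends to a commutative submonad Z of T: Z is closed under the action of T on functions, the unit, multiplication, and strength of T (co)restrict to Z, and the resulting monad Z is commutative. -/
/-- A monad on the category of sets, given by its endofunctor action, unit and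
multiplication, satisfying the usual functor, naturality and monad laws.
Such a monad carries a canonical strength `τ (x, s) = T (fun y => (x, y)) s`. -/
structure SetMonad where
  T : Type → Type
  map : ∀ {X Y : Type}, (X → Y) → T X → T Y
  η : ∀ {X : Type}, X → T X
  μ : ∀ {X : Type}, T (T X) → T X
  map_id : ∀ {X : Type} (t : T X), map id t = t
  map_comp : ∀ {X Y Z : Type} (f : X → Y) (g : Y → Z) (t : T X),
    map (g ∘ f) t = map g (map f t)
  η_nat : ∀ {X Y : Type} (f : X → Y) (x : X), map f (η x) = η (f x)
  μ_nat : ∀ {X Y : Type} (f : X → Y) (t : T (T X)), map f (μ t) = μ (map (map f) t)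
  unit_left : ∀ {X : Type} (t : T X), μ (η t) = t
  unit_right : ∀ {X : Type} (t : T X), μ (map η t) = t
  mu_assoc : ∀ {X : Type} (t : T (T (T X))), μ (μ t) = μ (map μ t)

namespace SetMonad

variable (M : SetMonad)

/-- The double strength `μ ∘ T τ' ∘ τ` (first the left strength, then the
right strength), computed elementwise via the canonical strength on `Set`. -/
def dstL {X Y : Type} (t : M.T X) (s : M.T Y) : M.T (X × Y) :=
  M.μ (M.map (fun y => M.map (fun x => (x, y)) t) s)

/-- The double strength `μ ∘ T τ ∘ τ'` (first the right strength, then the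
left strength), computed elementwise via the canonical strength on `Set`. -/
def dstR {X Y : Type} (t : M.T X) (s : M.T Y) : M.T (X × Y) :=
  M.μ (M.map (fun x => M.map (fun y => (x, y)) s) t)

/-- An element `t ∈ T X` is central if it commutes with every element of every
`T Y`: `μ (T τ' (τ (t, s))) = μ (T τ (τ' (t, s)))`. -/
def Central {X : Type} (t : M.T X) : Prop :=
  ∀ (Y : Type) (s : M.T Y), M.dstL t s = M.dstR t s

/-- A monad on `Set` is commutative when its two double strengths agree. -/
def Commutative : Prop :=
  ∀ (X Y : Type) (t : M.T X) (s : M.T Y), M.dstL t s = M.dstR t s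

lemma map_map {X Y Z : Type} (f : X → Y) (g : Y → Z) (t : M.T X) :
    M.map g (M.map f t) = M.map (fun x => g (f x)) t := (M.map_comp f g t).symm

lemma dstL_map_left {X X' Y : Type} (f : X → X') (t : M.T X) (s : M.T Y) :
    M.dstL (M.map f t) s = M.map (fun p => (f p.1, p.2)) (M.dstL t s) := by
  simp only [dstL, M.μ_nat, M.map_map]

lemma dstR_map_left {X X' Y : Type} (f : X → X') (t : M.T X) (s : M.T Y) :
    M.dstR (M.map f t) s = M.map (fun p => (f p.1, p.2)) (M.dstR t s) := by
  simp only [dstR, M.μ_nat, M.map_map]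

lemma central_map {X Y : Type} (f : X → Y) (t : M.T X) (ht : M.Central t) :
    M.Central (M.map f t) := by
  intro Z s
  rw [M.dstL_map_left, M.dstR_map_left, ht]

lemma central_eta {X : Type} (x : X) : M.Central (M.η x) := by
  intro Y s
  have h1 : M.dstL (M.η x) s = M.map (fun y => (x, y)) s := by
    simp only [dstL, M.η_nat]
    rw [← M.unit_right (M.map (fun y => (x, y)) s), M.map_map]
  have h2 : M.dstR (M.η x) s = M.map (fun y => (x, y)) s := by
    simp only [dstR, M.η_nat, M.unit_left]
  rw [h1, h2]

lemma dstR_mu {X Y : Type} (u : M.T (M.T X)) (s : M.T Y) :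
    M.dstR (M.μ u) s = M.μ (M.map (fun v => M.dstR v s) u) := by
  simp only [dstR, M.μ_nat, M.mu_assoc, M.map_map]

lemma dstL_mu {X Y : Type} (u : M.T (M.T X)) (hc : M.Central u) (s : M.T Y) :
    M.dstL (M.μ u) s = M.μ (M.map (fun v => M.dstL v s) u) := by
  have e1 : M.dstL (M.μ u) s
      = M.μ (M.map (fun p : M.T X × Y => M.map (fun x => (x, p.2)) p.1) (M.dstL u s)) := by
    simp only [dstL, M.μ_nat, M.mu_assoc, M.map_map]
  have e2 : M.μ (M.map (fun p : M.T X × Y => M.map (fun x => (x, p.2)) p.1) (M.dstR u s))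
      = M.μ (M.map (fun v => M.dstL v s) u) := by
    simp only [dstL, dstR, M.μ_nat, M.mu_assoc, M.map_map]
  rw [e1, hc, e2]

lemma central_mu {X : Type} (t : M.T {s : M.T X // M.Central s}) (ht : M.Central t) :
    M.Central (M.μ (M.map Subtype.val t)) := by
  intro Y s
  have hu : M.Central (M.map (Subtype.val : {s : M.T X // M.Central s} → M.T X) t) :=
    M.central_map _ t ht
  rw [M.dstL_mu _ hu, M.dstR_mu, M.map_map, M.map_map]
  have : (fun z : {s : M.T X // M.Central s} => M.dstL z.val s)
      = fun z => M.dstR z.val s := funext fun z => z.prop Y s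
  rw [this]

end SetMonad

/-- For any monad `T` on `Set`, the centre
`Z X = { t ∈ T X | t is central }` is a commutative submonad of `T`:
it is closed under the functorial action on functions, the unit, the
multiplication and the (canonical) strength of `T` (co)restrict to it,
and the resulting monad is commutative (its two double strengths agree,
and their values are again central). -/
theorem centre_is_commutative_submonad (M : SetMonad) :
    -- closure under the functor action
    (∀ {X Y : Type} (f : X → Y) (t : M.T X), M.Central t → M.Central (M.map f t)) ∧
    -- the unit corestricts to the centre
    (∀ {X : Type} (x : X), M.Central (M.η x)) ∧
    -- the multiplication (co)restricts: applying `μ` to an element of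
    -- `Z (Z X)` (viewed in `T (T X)` via the inclusion) yields a central element
    (∀ {X : Type} (t : M.T {s : M.T X // M.Central s}),
      M.Central t → M.Central (M.μ (M.map Subtype.val t))) ∧
    -- the canonical strength (co)restricts to the centre
    (∀ {X Y : Type} (x : X) (t : M.T Y), M.Central t →
      M.Central (M.map (fun y => (x, y)) t)) ∧
    -- the resulting monad is commutative: on central elements the two double
    -- strengths agree and their common value is again central
    (∀ {X Y : Type} (t : M.T X) (s : M.T Y), M.Central t → M.Central s →
      M.dstL t s = M.dstR t s ∧ M.Central (M.dstL t s)) := by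
  refine ⟨fun f t ht => M.central_map f t ht, fun x => M.central_eta x,
    fun t ht => M.central_mu t ht, fun x t ht => M.central_map _ t ht, ?_⟩
  intro X Y t s ht hs
  refine ⟨ht Y s, ?_⟩
  rw [ht Y s]
  have hval : M.dstR t s
      = M.μ (M.map Subtype.val
          (M.map (fun x : X => (⟨M.map (fun y => (x, y)) s,
            M.central_map _ s hs⟩ : {s' : M.T (X × Y) // M.Central s'})) t)) := by
    simp only [SetMonad.dstR, M.map_map]
  rw [hval]
  exact M.central_mu _ (M.central_map _ t ht)
end

section
/- Let M be a monoid and T = (- × M) the writer monad on Set with its canonical strength. Then the centre of T is the writer monad (- × Z(M)) where Z(M) is the centre of the monoid M; i.e., an element (x, m) ∈ X × M is central for T if and only if m ∈ Z(M). -/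
/-- The writer monad `X ↦ X × M` on `Set` induced by a monoid `M`. -/
def writerMonad (M : Type) [Monoid M] : SetMonad where
  T X := X × M
  map f t := (f t.1, t.2)
  η x := (x, 1)
  μ t := (t.1.1, t.1.2 * t.2)
  map_id t := rfl
  map_comp f g t := rfl
  η_nat f x := rfl
  μ_nat f t := rfl
  unit_left t := by simp
  unit_right t := by simp
  mu_assoc t := by simp [mul_assoc]

/-- For the writer monad `(- × M)` on `Set`, an element
`t = (x, m) ∈ X × M` is central if and only if `m` lies in the centre of the
monoid `M`. Hence the centre of the writer monad is `(- × Z(M))`. -/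
theorem writer_central_iff (M : Type) [Monoid M] (X : Type) (t : X × M) :
    (writerMonad M).Central t ↔ t.2 ∈ Submonoid.center M := by
  constructor
  · intro h
    rw [Submonoid.mem_center_iff]
    intro m
    have := congrArg Prod.snd (h Unit ((), m))
    simpa [SetMonad.dstL, SetMonad.dstR, writerMonad] using this.symm
  · intro h Y s
    simp only [SetMonad.dstL, SetMonad.dstR, writerMonad]
    exact Prod.ext rfl ((Submonoid.mem_center_iff.mp h s.2).symm)
end

section
/- Let S be a nontrivial set (having at least two elements) and T = ((- → S) → S) the continuation monad on Set. Then the centre of T at any set X is exactly the image of the unit: Z X = η_X(X), where Z X = { t ∈ TX | ∀ Y, ∀ s ∈ TY, μ(T τ'(τ(t,s))) = μ(T τ(τ'(t,s))) }. Consequently the centre of the continuation monad is naturally isomorphic to the identity monad. -/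
/-- The continuation monad `X ↦ ((X → S) → S)` on `Set`. -/
def contMonad (S : Type) : SetMonad where
  T X := (X → S) → S
  map f t := fun k => t (fun x => k (f x))
  η x := fun k => k x
  μ t := fun k => t (fun u => u k)
  map_id t := rfl
  map_comp f g t := rfl
  η_nat f x := rfl
  μ_nat f t := rfl
  unit_left t := rfl
  unit_right t := rfl
  mu_assoc t := rfl

/-- For the continuation monad with a nontrivial answer set
`S` (at least two elements), the central elements of `T X` are exactly those in
the image of the unit; hence the centre of the continuation monad is (naturally
isomorphic to) the identity monad. -/
theorem contMonad_central_iff (S : Type) (hS : ∃ a b : S, a ≠ b)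
    (X : Type) (t : (contMonad S).T X) :
    (contMonad S).Central t ↔ ∃ x : X, t = (contMonad S).η x := by
  classical
  constructor
  · intro h
    obtain ⟨a, b, hab⟩ := hS
    have key : ∀ (s : ((X → S) → S) → S),
        s t = t (fun x => s (fun f => f x)) := by
      intro s
      exact congrFun (h (X → S) s) (fun p => p.2 p.1)
    by_contra hx
    push_neg at hx
    have h1 := key (fun u => if u = t then a else b)
    have h2 : (fun x => if (fun f : X → S => f x) = t then a else b)
        = fun _ : X => b := by
      funext x
      rw [if_neg]
      intro he
      exact hx x he.symm
    rw [h2] at h1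
    have h3 := key (fun _ => b)
    exact hab ((if_pos rfl).symm.trans (h1.trans h3.symm))
  · rintro ⟨x, rfl⟩
    intro Y s
    rfl
end

section
/- Let C be the full subcategory of Set whose objects are finite powers of the dihedral group D₄ (sets of cardinality 8^n), with its cartesian structure, and let M = (- × D₄) be the writer monad on C. Then M is not centralisable: there is no monad Z on C whose Kleisli category is isomorphic to the premonoidal centre Z(C_M) of the Kleisli category of M. (Proof idea: the homset Z(C_M)[1,1] has cardinality 2 = |Z(D₄)|, but every homset of the form C[X, ZY] has cardinality a power of 8.) -/
/-- Objects of the full subcategory `C` of `Set` generated by finite powers of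
the dihedral group `D₄`: the object indexed by `n` is `D₄ⁿ`. -/
abbrev DihObj (n : ℕ) : Type := Fin n → DihedralGroup 4

/-- `ι : Z → X × D₄` is a central cone (at the object `X`) of the writer monad
`M = (- × D₄)` on `C`: for every object `D₄ᵏ` of `C`, every `s ∈ M(D₄ᵏ)` and
every `z ∈ Z`, the two double-strength composites agree on `(ι z, s)`
(computed elementwise for the writer monad, this is the displayed equation). -/
def DihCentralCone {m n : ℕ} (ι : DihObj n → DihObj m × DihedralGroup 4) : Prop :=
  ∀ (k : ℕ) (s : DihObj k × DihedralGroup 4) (z : DihObj n),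
    ((((ι z).1, s.1), (ι z).2 * s.2) : (DihObj m × DihObj k) × DihedralGroup 4) =
      (((ι z).1, s.1), s.2 * (ι z).2)

/-- The centre of `D₄` is `{1, r²}`. -/
lemma dih_center (x : DihedralGroup 4) (h : ∀ t : DihedralGroup 4, x * t = t * x) :
    x = 1 ∨ x = DihedralGroup.r 2 := by
  revert h; revert x; decide

lemma dih_r2_central : ∀ t : DihedralGroup 4,
    DihedralGroup.r 2 * t = t * DihedralGroup.r 2 := by decide

/-- The writer monad `(- × D₄)` on the full subcategory of
`Set` whose objects are the finite powers of `D₄` is *not* centralisable: it is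
not the case that at every object `D₄ᵐ` there exists a terminal central cone,
i.e. an object `D₄ⁿ` and a central cone `ι : D₄ⁿ → D₄ᵐ × D₄` through which
every central cone (from an object of the subcategory) factors uniquely. -/
theorem dihedral_writer_not_centralisable :
    ¬ ∀ (m : ℕ), ∃ (n : ℕ) (ι : DihObj n → DihObj m × DihedralGroup 4),
      DihCentralCone ι ∧
        ∀ (k : ℕ) (ι' : DihObj k → DihObj m × DihedralGroup 4),
          DihCentralCone ι' → ∃! φ : DihObj k → DihObj n, ι ∘ φ = ι' := by
  intro h
  obtain ⟨n, ι, hcone, hterm⟩ := h 0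
  have e0 : DihObj 0 := fun i => i.elim0
  -- every value of ι has central second component
  have hcent : ∀ z : DihObj n, (ι z).2 = 1 ∨ (ι z).2 = DihedralGroup.r 2 := by
    intro z
    refine dih_center _ (fun t => ?_)
    have := hcone 0 (e0, t) z
    exact congrArg Prod.snd this
  -- ι is injective
  have hinj : Function.Injective ι := by
    intro z z' hzz
    have hc : DihCentralCone (fun _ : DihObj 0 => ι z) := by
      intro k s _
      exact hcone k s z
    obtain ⟨φ, hφ, huniq⟩ := hterm 0 _ hc
    have h1 : (fun _ : DihObj 0 => z) = φ := by
      refine huniq _ ?_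
      funext _; rfl
    have h2 : (fun _ : DihObj 0 => z') = φ := by
      refine huniq _ ?_
      funext _; exact hzz.symm
    have := h1.trans h2.symm
    exact congrFun this e0
  -- hence card (DihObj n) ≤ 2
  have fB : Function.Injective (fun z : DihObj n => decide ((ι z).2 = 1)) := by
    intro z z' hb
    apply hinj
    have hz := hcent z
    have hz' := hcent z'
    have hfst : (ι z).1 = (ι z').1 := Subsingleton.elim _ _
    have hsnd : (ι z).2 = (ι z').2 := by
      simp only at hb
      rcases hz with h1 | h1 <;> rcases hz' with h2 | h2 <;>
        simp [h1, h2] at hb ⊢ <;> exact absurd hb (by decide)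
    exact Prod.ext hfst hsnd
  have hcard : Fintype.card (DihObj n) ≤ 2 := by
    have := Fintype.card_le_of_injective _ fB
    simpa using this
  -- two distinct elements from the two central cones
  have hc1 : DihCentralCone (fun _ : DihObj 0 => ((e0 : DihObj 0), (1 : DihedralGroup 4))) := by
    intro k s z
    simp
  have hc2 : DihCentralCone (fun _ : DihObj 0 => ((e0 : DihObj 0), DihedralGroup.r 2)) := by
    intro k s z
    simp [dih_r2_central]
  obtain ⟨φ₁, hφ₁, -⟩ := hterm 0 _ hc1
  obtain ⟨φ₂, hφ₂, -⟩ := hterm 0 _ hc2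
  have hv1 : (ι (φ₁ e0)).2 = 1 := congrArg Prod.snd (congrFun hφ₁ e0)
  have hv2 : (ι (φ₂ e0)).2 = DihedralGroup.r 2 := congrArg Prod.snd (congrFun hφ₂ e0)
  have hne : φ₁ e0 ≠ φ₂ e0 := by
    intro hEq
    rw [hEq, hv2] at hv1
    exact absurd hv1 (by decide)
  -- card (DihObj n) = 8 ^ n, and 2 ≤ 8 ^ n ≤ 2 is impossible
  have hcard8 : Fintype.card (DihObj n) = 8 ^ n := by
    rw [Fintype.card_fun]
    norm_num [DihedralGroup.card]
  cases n with
  | zero => exact hne (Subsingleton.elim _ _)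
  | succ n' =>
      rw [hcard8] at hcard
      have : 8 ≤ 8 ^ (n' + 1) := Nat.le_self_pow (Nat.succ_ne_zero n') 8 |>.trans_eq rfl
      omega
end

section
/- Let T be a centralisable strong monad on a symmetric monoidal category C with centre Z (built from terminal central cones). Then the canonical embedding I : C_Z → C_T of Kleisli categories corestricts to an isomorphism of categories C_Z ≅ Z(C_T), where Z(C_T) is the premonoidal centre of the Kleisli category of T. -/
open CategoryTheory MonoidalCategory

universe v u

namespace StrongMonad

variable {C : Type u} [Category.{v} C] [MonoidalCategory C] [SymmetricCategory C]
  (S : StrongMonad C)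

/-- Naturality of the right strength in its non-monadic argument. -/
lemma rstr_natural_right_s13 (X : C) {A B : C} (g : A ⟶ B) :
    (S.T.obj X ◁ g) ≫ S.rstr X B = S.rstr X A ≫ S.T.map (X ◁ g) := by
  unfold rstr
  rw [← Category.assoc, BraidedCategory.braiding_naturality_right,
    Category.assoc, ← Category.assoc (g ▷ S.T.obj X), S.str_natural_left,
    Category.assoc, ← S.T.map_comp, BraidedCategory.braiding_naturality_left,
    S.T.map_comp]
  simp

/-- Every central cone is a central morphism in the Kleisli category. -/
lemma IsCentralCone.isCentralMorphism {X Y : C} {f : X ⟶ S.T.obj Y}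
    (hf : S.IsCentralCone f) : S.IsCentralMorphism f := by
  intro X' Y' f'
  have h1 : S.rstr Y X' ≫ S.T.map (Y ◁ f') =
      (S.T.obj Y ◁ f') ≫ S.rstr Y (S.T.obj Y') := (S.rstr_natural_right_s13 Y f').symm
  calc (f ▷ X') ≫ S.rstr Y X' ≫ S.T.map ((Y ◁ f') ≫ S.str Y Y') ≫ S.T.μ.app (Y ⊗ Y')
      = (X ◁ f') ≫ ((f ▷ S.T.obj Y') ≫ S.rstr Y (S.T.obj Y') ≫
          S.T.map (S.str Y Y') ≫ S.T.μ.app (Y ⊗ Y')) := by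
        rw [S.T.map_comp]
        slice_lhs 2 3 => rw [h1]
        slice_lhs 1 2 => rw [← whisker_exchange]
        simp
    _ = (X ◁ f') ≫ ((f ▷ S.T.obj Y') ≫ S.str (S.T.obj Y) Y' ≫
          S.T.map (S.rstr Y Y') ≫ S.T.μ.app (Y ⊗ Y')) := by rw [← hf Y']
    _ = (X ◁ f') ≫ S.str X Y' ≫ S.T.map ((f ▷ Y') ≫ S.rstr Y Y') ≫
          S.T.μ.app (Y ⊗ Y') := by
        rw [S.T.map_comp]
        slice_rhs 2 3 => rw [← S.str_natural_left]
        simp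

/-- Central morphisms are closed under precomposition with plain morphisms. -/
lemma IsCentralMorphism.precomp {A X Y : C} {g : A ⟶ S.T.obj Y}
    (hg : S.IsCentralMorphism g) (h : X ⟶ A) : S.IsCentralMorphism (h ≫ g) := by
  intro X' Y' f'
  have key := hg f'
  calc ((h ≫ g) ▷ X') ≫ S.rstr Y X' ≫ S.T.map ((Y ◁ f') ≫ S.str Y Y') ≫
        S.T.μ.app (Y ⊗ Y')
      = (h ▷ X') ≫ (g ▷ X') ≫ S.rstr Y X' ≫ S.T.map ((Y ◁ f') ≫ S.str Y Y') ≫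
          S.T.μ.app (Y ⊗ Y') := by simp
    _ = (h ▷ X') ≫ (A ◁ f') ≫ S.str A Y' ≫ S.T.map ((g ▷ Y') ≫ S.rstr Y Y') ≫
          S.T.μ.app (Y ⊗ Y') := by rw [key]
    _ = (X ◁ f') ≫ S.str X Y' ≫ S.T.map (((h ≫ g) ▷ Y') ≫ S.rstr Y Y') ≫
          S.T.μ.app (Y ⊗ Y') := by
        slice_lhs 1 2 => rw [← whisker_exchange]
        slice_lhs 2 3 => rw [S.str_natural_left]
        simp [S.T.map_comp]

/-- Every central morphism is a central cone. -/
lemma IsCentralMorphism.isCentralCone {X Y : C} {g : X ⟶ S.T.obj Y}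
    (hg : S.IsCentralMorphism g) : S.IsCentralCone g := by
  intro Y'
  have key := hg (𝟙 (S.T.obj Y'))
  simp only [MonoidalCategory.whiskerLeft_id, Category.id_comp] at key
  rw [key]
  rw [S.T.map_comp]
  slice_rhs 1 2 => rw [← S.str_natural_left]
  simp

end StrongMonad

/-- Let `T` be a centralisable strong monad with centre `Z`
(a submonad `ι : Z ⇒ T` whose components are the terminal central cones). Then
the canonical embedding of Kleisli categories `I : C_Z → C_T`, `f ↦ ι ∘ f`,
corestricts to an isomorphism of categories `C_Z ≅ Z(C_T)`: it is identity on
objects, lands in the premonoidal centre, and is bijective onto the central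
morphisms. -/
theorem centre_kleisli_iso_premonoidal_centre
    {C : Type u} [Category.{v} C] [MonoidalCategory C] [SymmetricCategory C]
    (T Z : StrongMonad C) (ι : StrongMonad.Hom Z T)
    (hmono : ∀ X : C, Mono (ι.app X))
    (hterm : ∀ X : C, T.IsTerminalCentralCone (ι.app X)) :
    (∀ {X Y : C} (f : X ⟶ Z.T.obj Y), T.IsCentralMorphism (f ≫ ι.app Y)) ∧
    (∀ {X Y : C} (g : X ⟶ T.T.obj Y), T.IsCentralMorphism g →
      ∃! f : X ⟶ Z.T.obj Y, f ≫ ι.app Y = g) := by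
  constructor
  · intro X Y f
    exact StrongMonad.IsCentralMorphism.precomp T
      (StrongMonad.IsCentralCone.isCentralMorphism T (hterm Y).1) f
  · intro X Y g hg
    exact (hterm Y).2 g (StrongMonad.IsCentralMorphism.isCentralCone T hg)
end

section
/- Let T be a centralisable strong monad on a symmetric monoidal category C with centre Z, and let S be a strong submonad of T such that every component ι^S_X : S X → T X is a central cone of T at X. Then ι^S factors through the centre: there is a (unique) morphism of strong monads S ⇒ Z whose composite with the inclusion Z ⇒ T is ι^S; hence S is a commutative submonad of Z. -/
open CategoryTheory MonoidalCategory

universe v u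

section Aux

variable {C : Type u} [Category.{v} C] [MonoidalCategory C] [SymmetricCategory C]

lemma StrongMonad.rstr_natural_right_s16 (M : StrongMonad C) (X : C) {Y Y' : C} (g : Y ⟶ Y') :
    (M.T.obj X ◁ g) ≫ M.rstr X Y' = M.rstr X Y ≫ M.T.map (X ◁ g) := by
  simp only [StrongMonad.rstr]
  rw [← Category.assoc, BraidedCategory.braiding_naturality_right, Category.assoc,
    ← Category.assoc (g ▷ _), M.str_natural_left g X, Category.assoc, ← M.T.map_comp,
    BraidedCategory.braiding_naturality_left, M.T.map_comp]
  simp only [Category.assoc]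

lemma StrongMonad.Hom.rstr_hom {S₁ S₂ : StrongMonad C} (φ : StrongMonad.Hom S₁ S₂)
    (X Y : C) :
    S₁.rstr X Y ≫ φ.app (X ⊗ Y) = (φ.app X ▷ Y) ≫ S₂.rstr X Y := by
  simp only [StrongMonad.rstr, Category.assoc]
  rw [φ.naturality]
  slice_lhs 2 3 => rw [φ.strength]
  slice_lhs 1 2 => rw [← BraidedCategory.braiding_naturality_left]
  simp only [Category.assoc]

/-- A strong submonad of a centralisable strong monad, all components of which are
central cones, is commutative. -/
lemma central_submonad_commutative
    {T S : StrongMonad C} (ιS : StrongMonad.Hom S T)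
    (hSmono : ∀ X : C, Mono (ιS.app X))
    (hScone : ∀ X : C, T.IsCentralCone (ιS.app X)) : S.Commutative := by
  intro X Y
  rw [← cancel_mono (ιS.app (X ⊗ Y))]
  have h1 : S.str (S.T.obj X) Y ≫ S.T.map (S.rstr X Y) ≫ S.T.μ.app (X ⊗ Y) ≫ ιS.app (X ⊗ Y)
      = (S.T.obj X ◁ ιS.app Y) ≫ (ιS.app X ▷ T.T.obj Y) ≫ T.str (T.T.obj X) Y ≫
        T.T.map (T.rstr X Y) ≫ T.T.μ.app (X ⊗ Y) := by
    slice_lhs 3 4 => rw [ιS.mult]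
    slice_lhs 2 3 => rw [ιS.naturality]
    slice_lhs 1 2 => rw [ιS.strength]
    slice_lhs 3 4 => rw [← Functor.map_comp, ιS.rstr_hom, Functor.map_comp]
    slice_lhs 2 3 => rw [← T.str_natural_left (ιS.app X) Y]
    simp only [Category.assoc]
  have h2 : S.rstr X (S.T.obj Y) ≫ S.T.map (S.str X Y) ≫ S.T.μ.app (X ⊗ Y) ≫ ιS.app (X ⊗ Y)
      = (ιS.app X ▷ S.T.obj Y) ≫ (T.T.obj X ◁ ιS.app Y) ≫ T.rstr X (T.T.obj Y) ≫
        T.T.map (T.str X Y) ≫ T.T.μ.app (X ⊗ Y) := by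
    slice_lhs 3 4 => rw [ιS.mult]
    slice_lhs 2 3 => rw [ιS.naturality]
    slice_lhs 1 2 => rw [ιS.rstr_hom]
    slice_lhs 3 4 => rw [← Functor.map_comp, ιS.strength, Functor.map_comp]
    slice_lhs 2 3 => rw [← T.rstr_natural_right_s16 X (ιS.app Y)]
    simp only [Category.assoc]
  have h3 := hScone X Y
  simp only [Category.assoc] at h1 h2 h3 ⊢
  rw [h1, h2, h3, ← Category.assoc, whisker_exchange, Category.assoc]

end Aux

/-- Let `T` be centralisable with centre `ι^Z : Z ⇒ T`
(components are the terminal central cones) and let `ι^S : S ⇒ T` be a strong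
submonad all of whose components are central cones of `T`. Then `ι^S` factors
through the centre via a unique morphism of strong monads `κ : S ⇒ Z` with
`ι^Z ∘ κ = ι^S`; moreover `κ` is componentwise monic and `S` is commutative, so
`S` is a commutative submonad of `Z`. -/
theorem central_submonad_factors_through_centre
    {C : Type u} [Category.{v} C] [MonoidalCategory C] [SymmetricCategory C]
    (T Z S : StrongMonad C) (ιZ : StrongMonad.Hom Z T) (ιS : StrongMonad.Hom S T)
    (hZmono : ∀ X : C, Mono (ιZ.app X))
    (hZterm : ∀ X : C, T.IsTerminalCentralCone (ιZ.app X))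
    (hSmono : ∀ X : C, Mono (ιS.app X))
    (hScone : ∀ X : C, T.IsCentralCone (ιS.app X)) :
    ∃ κ : StrongMonad.Hom S Z,
      (∀ X : C, κ.app X ≫ ιZ.app X = ιS.app X) ∧
      (∀ κ' : StrongMonad.Hom S Z,
        (∀ X : C, κ'.app X ≫ ιZ.app X = ιS.app X) → ∀ X : C, κ'.app X = κ.app X) ∧
      (∀ X : C, Mono (κ.app X)) ∧ S.Commutative := by
  classical
  have exu : ∀ X : C, ∃! φ : S.T.obj X ⟶ Z.T.obj X, φ ≫ ιZ.app X = ιS.app X :=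
    fun X => (hZterm X).2 (ιS.app X) (hScone X)
  set k : ∀ X : C, S.T.obj X ⟶ Z.T.obj X := fun X => (exu X).choose with hk
  have hkfac : ∀ X : C, k X ≫ ιZ.app X = ιS.app X := fun X => (exu X).choose_spec.1
  refine ⟨⟨k, ?_, ?_, ?_, ?_⟩, fun X => hkfac X, ?_, ?_, ?_⟩
  · intro X Y f
    rw [← cancel_mono (ιZ.app Y)]
    simp only [Category.assoc]
    rw [hkfac, ιS.naturality, ιZ.naturality, ← Category.assoc, hkfac]
  · intro X
    rw [← cancel_mono (ιZ.app X)]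
    simp only [Category.assoc]
    rw [hkfac, ιS.unit, ιZ.unit]
  · intro X
    rw [← cancel_mono (ιZ.app X)]
    simp only [Category.assoc]
    rw [hkfac, ιS.mult, ιZ.mult]
    slice_rhs 2 3 => rw [ιZ.naturality]
    slice_rhs 1 2 => rw [hkfac]
    slice_rhs 2 3 => rw [← Functor.map_comp, hkfac]
  · intro X Y
    rw [← cancel_mono (ιZ.app (X ⊗ Y))]
    simp only [Category.assoc]
    rw [hkfac, ιS.strength, ιZ.strength]
    slice_rhs 1 2 => rw [← MonoidalCategory.whiskerLeft_comp, hkfac]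
  · intro κ' hκ' X
    exact (exu X).choose_spec.2 (κ'.app X) (hκ' X)
  · intro X
    exact mono_of_mono_fac (hkfac X)
  · exact central_submonad_commutative ιS hSmono hScone
end

section
/- Every strong monad T on the category DCPO of directed-complete partial orders and Scott-continuous maps (with the cartesian monoidal structure) is centralisable: for each dcpo X, the subset Z X = { t ∈ TX | ∀ dcpo Y, ∀ s ∈ TY, μ(T τ'(τ(t,s))) = μ(T τ(τ'(t,s))) } with the inherited order is a sub-dcpo of TX (closed under directed suprema), and the inclusion Z X ↪ T X is a terminal central cone of T at X. -/
/-- A directed-complete partial order: every nonempty directed subset has a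
least upper bound. -/
class DcpoStr (α : Type) extends PartialOrder α where
  dSup : ∀ d : Set α, d.Nonempty → DirectedOn (· ≤ ·) d → α
  isLUB_dSup : ∀ (d : Set α) (hn : d.Nonempty) (hd : DirectedOn (· ≤ ·) d),
    IsLUB d (dSup d hn hd)

/-- A bundled dcpo, i.e. an object of the category `DCPO`. -/
structure Dcpo where
  carrier : Type
  [str : DcpoStr carrier]

instance : CoeSort Dcpo Type :=
  ⟨Dcpo.carrier⟩

instance (X : Dcpo) : DcpoStr X.carrier :=
  X.str

theorem dirFst {α β : Type} [Preorder α] [Preorder β] {d : Set (α × β)}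
    (hd : DirectedOn (· ≤ ·) d) : DirectedOn (· ≤ ·) (Prod.fst '' d) := by
  rintro _ ⟨a, ha, rfl⟩ _ ⟨b, hb, rfl⟩
  obtain ⟨c, hc, hac, hbc⟩ := hd a ha b hb
  exact ⟨c.1, ⟨c, hc, rfl⟩, hac.1, hbc.1⟩

theorem dirSnd {α β : Type} [Preorder α] [Preorder β] {d : Set (α × β)}
    (hd : DirectedOn (· ≤ ·) d) : DirectedOn (· ≤ ·) (Prod.snd '' d) := by
  rintro _ ⟨a, ha, rfl⟩ _ ⟨b, hb, rfl⟩
  obtain ⟨c, hc, hac, hbc⟩ := hd a ha b hb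
  exact ⟨c.2, ⟨c, hc, rfl⟩, hac.2, hbc.2⟩

/-- The cartesian product of two dcpos, ordered componentwise. -/
def Dcpo.prod (X Y : Dcpo) : Dcpo where
  carrier := X.carrier × Y.carrier
  str :=
    { dSup := fun d hn hd =>
        (DcpoStr.dSup (Prod.fst '' d) (hn.image _) (dirFst hd),
         DcpoStr.dSup (Prod.snd '' d) (hn.image _) (dirSnd hd))
      isLUB_dSup := by
        intro d hn hd
        constructor
        · rintro p hp
          exact ⟨(DcpoStr.isLUB_dSup (Prod.fst '' d) (hn.image _) (dirFst hd)).1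
              ⟨p, hp, rfl⟩,
            (DcpoStr.isLUB_dSup (Prod.snd '' d) (hn.image _) (dirSnd hd)).1
              ⟨p, hp, rfl⟩⟩
        · rintro p hp
          refine ⟨(DcpoStr.isLUB_dSup (Prod.fst '' d) (hn.image _) (dirFst hd)).2 ?_,
            (DcpoStr.isLUB_dSup (Prod.snd '' d) (hn.image _) (dirSnd hd)).2 ?_⟩
          · rintro _ ⟨a, ha, rfl⟩; exact (hp ha).1
          · rintro _ ⟨a, ha, rfl⟩; exact (hp ha).2 }

/-- A strong monad on the category `DCPO` of dcpos and Scott-continuous maps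
(with the cartesian monoidal structure): an action `T` on dcpos and on maps
(preserving Scott-continuity), a unit, a multiplication and a strength, all
Scott-continuous, satisfying the functor, naturality, monad and strength laws
(on Scott-continuous maps). -/
structure DcpoStrongMonad where
  T : Dcpo → Dcpo
  map : ∀ {X Y : Dcpo}, (X.carrier → Y.carrier) → (T X).carrier → (T Y).carrier
  map_scott : ∀ {X Y : Dcpo} {f : X.carrier → Y.carrier},
    ScottContinuous f → ScottContinuous (map (X := X) (Y := Y) f)
  map_id : ∀ {X : Dcpo} (t : (T X).carrier), map id t = t
  map_comp : ∀ {X Y Z : Dcpo} {f : X.carrier → Y.carrier} {g : Y.carrier → Z.carrier},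
    ScottContinuous f → ScottContinuous g →
      ∀ t, map (g ∘ f) t = map g (map f t)
  η : ∀ {X : Dcpo}, X.carrier → (T X).carrier
  η_scott : ∀ {X : Dcpo}, ScottContinuous (η (X := X))
  η_nat : ∀ {X Y : Dcpo} {f : X.carrier → Y.carrier}, ScottContinuous f →
    ∀ x, map f (η x) = η (f x)
  μ : ∀ {X : Dcpo}, (T (T X)).carrier → (T X).carrier
  μ_scott : ∀ {X : Dcpo}, ScottContinuous (μ (X := X))
  μ_nat : ∀ {X Y : Dcpo} {f : X.carrier → Y.carrier}, ScottContinuous f →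
    ∀ t, map f (μ t) = μ (map (map f) t)
  unit_left : ∀ {X : Dcpo} (t : (T X).carrier), μ (η t) = t
  unit_right : ∀ {X : Dcpo} (t : (T X).carrier), μ (map η t) = t
  mu_assoc : ∀ {X : Dcpo} (t : (T (T (T X))).carrier), μ (μ t) = μ (map μ t)
  str : ∀ {X Y : Dcpo}, X.carrier → (T Y).carrier → (T (X.prod Y)).carrier
  str_scott : ∀ {X Y : Dcpo},
    ScottContinuous (fun p : X.carrier × (T Y).carrier => str p.1 p.2)
  str_nat : ∀ {X X' Y Y' : Dcpo} {f : X.carrier → X'.carrier}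
    {g : Y.carrier → Y'.carrier}, ScottContinuous f → ScottContinuous g →
      ∀ (x : X.carrier) (t : (T Y).carrier),
        str (f x) (map g t) = map (Prod.map f g) (str x t)
  str_eta : ∀ {X Y : Dcpo} (x : X.carrier) (y : Y.carrier),
    str x (η y) = η (X := X.prod Y) (x, y)
  str_mu : ∀ {X Y : Dcpo} (x : X.carrier) (t : (T (T Y)).carrier),
    str x (μ t) =
      μ (map (fun p : (X.prod (T Y)).carrier => str p.1 p.2) (str x t))

namespace DcpoStrongMonad

variable (M : DcpoStrongMonad)

/-- The right strength, obtained from the strength by the symmetry. -/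
def rstr {X Y : Dcpo} (t : (M.T X).carrier) (y : Y.carrier) :
    (M.T (X.prod Y)).carrier :=
  M.map Prod.swap (M.str y t)

/-- The double strength `μ ∘ T τ' ∘ τ` evaluated at `(t, s)`. -/
def dstL {X Y : Dcpo} (t : (M.T X).carrier) (s : (M.T Y).carrier) :
    (M.T (X.prod Y)).carrier :=
  M.μ (M.map (fun p : ((M.T X).prod Y).carrier => M.rstr p.1 p.2) (M.str t s))

/-- The double strength `μ ∘ T τ ∘ τ'` evaluated at `(t, s)`. -/
def dstR {X Y : Dcpo} (t : (M.T X).carrier) (s : (M.T Y).carrier) :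
    (M.T (X.prod Y)).carrier :=
  M.μ (M.map (fun p : (X.prod (M.T Y)).carrier => M.str p.1 p.2) (M.rstr t s))

/-- `t ∈ T X` is central if it commutes with every element of every `T Y`. -/
def Central {X : Dcpo} (t : (M.T X).carrier) : Prop :=
  ∀ (Y : Dcpo) (s : (M.T Y).carrier), M.dstL t s = M.dstR t s

end DcpoStrongMonad


section Helpers

variable {α β γ : Type*} [Preorder α] [Preorder β] [Preorder γ]

theorem dirImage {f : α → β} (hf : Monotone f) {d : Set α}
    (hd : DirectedOn (· ≤ ·) d) : DirectedOn (· ≤ ·) (f '' d) := by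
  rintro _ ⟨x, hx, rfl⟩ _ ⟨y, hy, rfl⟩
  obtain ⟨z, hz, hxz, hyz⟩ := hd x hx y hy
  exact ⟨f z, ⟨z, hz, rfl⟩, hf hxz, hf hyz⟩

theorem scottComp {f : α → β} {g : β → γ} (hg : ScottContinuous g)
    (hf : ScottContinuous f) : ScottContinuous (g ∘ f) := by
  intro d hn hd a ha
  rw [Set.image_comp]
  exact hg (hn.image f) (dirImage hf.monotone hd) (hf hn hd ha)

theorem swapScott : ScottContinuous (Prod.swap : α × β → β × α) := by
  intro d hn hd a ha
  constructor
  · rintro _ ⟨p, hp, rfl⟩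
    exact ⟨(ha.1 hp).2, (ha.1 hp).1⟩
  · intro b hb
    have h : (b.2, b.1) ∈ upperBounds d := by
      intro p hp
      exact ⟨(hb ⟨p, hp, rfl⟩).2, (hb ⟨p, hp, rfl⟩).1⟩
    exact ⟨(ha.2 h).2, (ha.2 h).1⟩

theorem scottFixSnd {f : α × β → γ} (hf : ScottContinuous f) (s : β) :
    ScottContinuous fun t => f (t, s) := by
  intro d hn hd a ha
  have hmono : Monotone (fun t : α => (t, s)) := fun x y h => ⟨h, le_refl s⟩
  have h1 : IsLUB ((fun t : α => (t, s)) '' d) (a, s) := by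
    constructor
    · rintro _ ⟨t, ht, rfl⟩
      exact ⟨ha.1 ht, le_refl s⟩
    · intro b hb
      obtain ⟨t0, ht0⟩ := hn
      exact ⟨ha.2 fun t ht => (hb ⟨t, ht, rfl⟩).1, (hb ⟨t0, ht0, rfl⟩).2⟩
  have h2 := hf (hn.image _) (dirImage hmono hd) h1
  rwa [Set.image_image] at h2

theorem scottFixFst {f : α × β → γ} (hf : ScottContinuous f) (s : α) :
    ScottContinuous fun t => f (s, t) :=
  scottFixSnd (scottComp hf swapScott) s

end Helpers

/-- Every strong monad `T` on `DCPO` is centralisable: for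
every dcpo `X` the set `Z X` of central elements of `T X` is closed under
suprema of nonempty directed subsets (so, with the inherited order, it is a
sub-dcpo of `T X`), the subtype inclusion `Z X ↪ T X` is Scott-continuous and
its image consists of central elements, and it is a terminal central cone: any
Scott-continuous map `ι' : W → T X` from a dcpo `W` whose values are central
factors uniquely through the inclusion by a Scott-continuous map. -/
theorem dcpoMonad_centralisable (M : DcpoStrongMonad) (X : Dcpo) :
    (∀ (d : Set (M.T X).carrier) (hn : d.Nonempty) (hd : DirectedOn (· ≤ ·) d),
      (∀ t ∈ d, M.Central t) → M.Central (DcpoStr.dSup d hn hd)) ∧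
    ScottContinuous (Subtype.val : {t : (M.T X).carrier // M.Central t} → (M.T X).carrier) ∧
    (∀ t : {t : (M.T X).carrier // M.Central t}, M.Central t.val) ∧
    (∀ (W : Dcpo) (ι' : W.carrier → (M.T X).carrier),
      ScottContinuous ι' → (∀ w, M.Central (ι' w)) →
        ∃! φ : W.carrier → {t : (M.T X).carrier // M.Central t},
          ScottContinuous φ ∧ ∀ w, (φ w).val = ι' w) := by
  have hL : ∀ (Y : Dcpo) (s : (M.T Y).carrier),
      ScottContinuous (fun t : (M.T X).carrier => M.dstL t s) := by
    intro Y s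
    have hstr1 : ScottContinuous (fun t : (M.T X).carrier => M.str t s) :=
      scottFixSnd M.str_scott s
    have h1 : ScottContinuous
        (fun p : ((M.T X).prod Y).carrier => M.str p.2 p.1) :=
      scottComp M.str_scott swapScott
    have hf : ScottContinuous
        (fun p : ((M.T X).prod Y).carrier => M.rstr p.1 p.2) :=
      scottComp (M.map_scott (swapScott (α := Y.carrier) (β := X.carrier))) h1
    exact scottComp M.μ_scott (scottComp (M.map_scott hf) hstr1)
  have hR : ∀ (Y : Dcpo) (s : (M.T Y).carrier),
      ScottContinuous (fun t : (M.T X).carrier => M.dstR t s) := by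
    intro Y s
    have hrstr : ScottContinuous (fun t : (M.T X).carrier => M.rstr t s) :=
      scottComp (M.map_scott (swapScott (α := (M.T Y).carrier) (β := X.carrier)))
        (scottFixFst M.str_scott s)
    have hg : ScottContinuous
        (fun p : (X.prod (M.T Y)).carrier => M.str p.1 p.2) := M.str_scott
    exact scottComp M.μ_scott (scottComp (M.map_scott hg) hrstr)
  have closure : ∀ (d : Set (M.T X).carrier) (hn : d.Nonempty)
      (hd : DirectedOn (· ≤ ·) d),
      (∀ t ∈ d, M.Central t) → M.Central (DcpoStr.dSup d hn hd) := by
    intro d hn hd hc Y s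
    have hlub := DcpoStr.isLUB_dSup d hn hd
    have h1 := hL Y s hn hd hlub
    have h2 := hR Y s hn hd hlub
    have himg : (fun t => M.dstL t s) '' d = (fun t => M.dstR t s) '' d := by
      ext x
      constructor <;> rintro ⟨t, ht, rfl⟩
      · exact ⟨t, ht, (hc t ht Y s).symm⟩
      · exact ⟨t, ht, hc t ht Y s⟩
    rw [himg] at h1
    exact h1.unique h2
  have hval : ScottContinuous
      (Subtype.val : {t : (M.T X).carrier // M.Central t} → (M.T X).carrier) := by
    intro d hn hd a ha
    constructor
    · rintro _ ⟨t, ht, rfl⟩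
      exact ha.1 ht
    · intro b hb
      have hdn : (Subtype.val '' d).Nonempty := hn.image _
      have hdd : DirectedOn (· ≤ ·) (Subtype.val '' d) :=
        dirImage (f := (Subtype.val : {t : (M.T X).carrier // M.Central t} → (M.T X).carrier)) (fun x y h => h) hd
      have hlub := DcpoStr.isLUB_dSup (Subtype.val '' d) hdn hdd
      have hcc : M.Central (DcpoStr.dSup (Subtype.val '' d) hdn hdd) :=
        closure _ hdn hdd (by rintro _ ⟨t, ht, rfl⟩; exact t.2)
      have hac : a ≤ (⟨_, hcc⟩ : {t : (M.T X).carrier // M.Central t}) :=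
        ha.2 fun t ht => hlub.1 ⟨t, ht, rfl⟩
      exact le_trans hac (hlub.2 hb)
  refine ⟨closure, hval, fun t => t.2, ?_⟩
  intro W ι' hι hcent
  refine ⟨fun w => ⟨ι' w, hcent w⟩, ⟨?_, fun w => rfl⟩, ?_⟩
  · intro d hn hd a ha
    have h := hι hn hd ha
    constructor
    · rintro _ ⟨w, hw, rfl⟩
      exact h.1 ⟨w, hw, rfl⟩
    · intro b hb
      exact h.2 (by rintro _ ⟨w, hw, rfl⟩; exact hb ⟨w, hw, rfl⟩)
  · intro ψ hψ
    funext w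
    exact Subtype.ext (hψ.2 w)
end
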